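/- Let A, H be Hopf quasigroups and Ψ : H⊗A → A⊗H an a-comonoidal distributive law. Then the wreath product object A⊗H with product μ = (μ_A⊗μ_H)∘(A⊗Ψ⊗H), tensor coproduct δ_{A⊗H}, tensor counit, and tensor unit is a non-associative bimonoid: δ_{A⊗H}∘μ = (μ⊗μ)∘δ_{(A⊗H)⊗(A⊗H)} and ε_{A⊗H}∘μ = ε_{A⊗H}⊗ε_{A⊗H}. -/
import Mathlib


open TensorProduct

noncomputable section

/-- A Hopf quasigroup over a commutative ring `R` (Klim–Majid), given by a unital magma
and comonoid structure on `H` whose counit and comultiplication are unital magma morphisms,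
together with an antipode satisfying the four Hopf quasigroup identities. -/
structure HopfQuasigroup (R : Type*) [CommRing R] (H : Type*) [AddCommGroup H] [Module R H] :
    Type _ where
  mul : H ⊗[R] H →ₗ[R] H
  unit : H
  counit : H →ₗ[R] R
  comul : H →ₗ[R] H ⊗[R] H
  antipode : H →ₗ[R] H
  mul_unit_left : ∀ h : H, mul (unit ⊗ₜ[R] h) = h
  mul_unit_right : ∀ h : H, mul (h ⊗ₜ[R] unit) = h
  coassoc : (TensorProduct.assoc R H H H).toLinearMap ∘ₗ comul.rTensor H ∘ₗ comul
      = comul.lTensor H ∘ₗ comul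
  counit_left : (TensorProduct.lid R H).toLinearMap ∘ₗ counit.rTensor H ∘ₗ comul = LinearMap.id
  counit_right : (TensorProduct.rid R H).toLinearMap ∘ₗ counit.lTensor H ∘ₗ comul = LinearMap.id
  counit_unit : counit unit = 1
  counit_mul : counit ∘ₗ mul
      = (TensorProduct.lid R R).toLinearMap ∘ₗ TensorProduct.map counit counit
  comul_unit : comul unit = unit ⊗ₜ[R] unit
  comul_mul : comul ∘ₗ mul = TensorProduct.map mul mul
      ∘ₗ (TensorProduct.tensorTensorTensorComm R H H H H).toLinearMap
      ∘ₗ TensorProduct.map comul comul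
  antipode_lH₁ : mul ∘ₗ TensorProduct.map antipode mul
      ∘ₗ (TensorProduct.assoc R H H H).toLinearMap ∘ₗ comul.rTensor H
      = (TensorProduct.lid R H).toLinearMap ∘ₗ counit.rTensor H
  antipode_lH₂ : mul ∘ₗ mul.lTensor H ∘ₗ (antipode.rTensor H).lTensor H
      ∘ₗ (TensorProduct.assoc R H H H).toLinearMap ∘ₗ comul.rTensor H
      = (TensorProduct.lid R H).toLinearMap ∘ₗ counit.rTensor H
  antipode_rH₁ : mul ∘ₗ mul.rTensor H ∘ₗ (TensorProduct.assoc R H H H).symm.toLinearMap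
      ∘ₗ (antipode.rTensor H).lTensor H ∘ₗ comul.lTensor H
      = (TensorProduct.rid R H).toLinearMap ∘ₗ counit.lTensor H
  antipode_rH₂ : mul ∘ₗ TensorProduct.map mul antipode
      ∘ₗ (TensorProduct.assoc R H H H).symm.toLinearMap ∘ₗ comul.lTensor H
      = (TensorProduct.rid R H).toLinearMap ∘ₗ counit.lTensor H

section DistLaw

variable {R : Type*} [CommRing R]

/-- The tensor product comonoid comultiplication on `X ⊗ Y`. -/
def comulT {X Y : Type*} [AddCommGroup X] [Module R X] [AddCommGroup Y] [Module R Y]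
    (hX : HopfQuasigroup R X) (hY : HopfQuasigroup R Y) :
    X ⊗[R] Y →ₗ[R] (X ⊗[R] Y) ⊗[R] (X ⊗[R] Y) :=
  (TensorProduct.tensorTensorTensorComm R X X Y Y).toLinearMap
    ∘ₗ TensorProduct.map hX.comul hY.comul

/-- The tensor product comonoid counit on `X ⊗ Y`. -/
def counitT {X Y : Type*} [AddCommGroup X] [Module R X] [AddCommGroup Y] [Module R Y]
    (hX : HopfQuasigroup R X) (hY : HopfQuasigroup R Y) : X ⊗[R] Y →ₗ[R] R :=
  (TensorProduct.lid R R).toLinearMap ∘ₗ TensorProduct.map hX.counit hY.counit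

variable {A H : Type*} [AddCommGroup A] [Module R A] [AddCommGroup H] [Module R H]

/-- (dl1): `Ψ∘(H⊗μ_A)∘(λ_H⊗λ_A⊗A) = (μ_A⊗H)∘(A⊗Ψ)∘(Ψ⊗A)∘(λ_H⊗λ_A⊗A)`. -/
def DL1 (hA : HopfQuasigroup R A) (hH : HopfQuasigroup R H)
    (Ψ : H ⊗[R] A →ₗ[R] A ⊗[R] H) : Prop :=
  Ψ ∘ₗ hA.mul.lTensor H ∘ₗ TensorProduct.map hH.antipode (hA.antipode.rTensor A)
    = hA.mul.rTensor H ∘ₗ (TensorProduct.assoc R A A H).symm.toLinearMap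
      ∘ₗ Ψ.lTensor A ∘ₗ (TensorProduct.assoc R A H A).toLinearMap
      ∘ₗ Ψ.rTensor A ∘ₗ (TensorProduct.assoc R H A A).symm.toLinearMap
      ∘ₗ TensorProduct.map hH.antipode (hA.antipode.rTensor A)

/-- Untwisted version of (dl1): `Ψ∘(H⊗μ_A) = (μ_A⊗H)∘(A⊗Ψ)∘(Ψ⊗A)`. -/
def DL1' (hA : HopfQuasigroup R A) (hH : HopfQuasigroup R H)
    (Ψ : H ⊗[R] A →ₗ[R] A ⊗[R] H) : Prop :=
  Ψ ∘ₗ hA.mul.lTensor H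
    = hA.mul.rTensor H ∘ₗ (TensorProduct.assoc R A A H).symm.toLinearMap
      ∘ₗ Ψ.lTensor A ∘ₗ (TensorProduct.assoc R A H A).toLinearMap
      ∘ₗ Ψ.rTensor A ∘ₗ (TensorProduct.assoc R H A A).symm.toLinearMap

/-- (dl2): `Ψ∘(μ_H⊗A)∘(H⊗λ_H⊗λ_A) = (A⊗μ_H)∘(Ψ⊗H)∘(H⊗Ψ)∘(H⊗λ_H⊗λ_A)`. -/
def DL2 (hA : HopfQuasigroup R A) (hH : HopfQuasigroup R H)
    (Ψ : H ⊗[R] A →ₗ[R] A ⊗[R] H) : Prop :=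
  Ψ ∘ₗ hH.mul.rTensor A ∘ₗ TensorProduct.map (hH.antipode.lTensor H) hA.antipode
    = hH.mul.lTensor A ∘ₗ (TensorProduct.assoc R A H H).toLinearMap
      ∘ₗ Ψ.rTensor H ∘ₗ (TensorProduct.assoc R H A H).symm.toLinearMap
      ∘ₗ Ψ.lTensor H ∘ₗ (TensorProduct.assoc R H H A).toLinearMap
      ∘ₗ TensorProduct.map (hH.antipode.lTensor H) hA.antipode

/-- Untwisted version of (dl2): `Ψ∘(μ_H⊗A) = (A⊗μ_H)∘(Ψ⊗H)∘(H⊗Ψ)`. -/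
def DL2' (hA : HopfQuasigroup R A) (hH : HopfQuasigroup R H)
    (Ψ : H ⊗[R] A →ₗ[R] A ⊗[R] H) : Prop :=
  Ψ ∘ₗ hH.mul.rTensor A
    = hH.mul.lTensor A ∘ₗ (TensorProduct.assoc R A H H).toLinearMap
      ∘ₗ Ψ.rTensor H ∘ₗ (TensorProduct.assoc R H A H).symm.toLinearMap
      ∘ₗ Ψ.lTensor H ∘ₗ (TensorProduct.assoc R H H A).toLinearMap

/-- (dl3): `Ψ∘(H⊗η_A) = η_A⊗H`. -/
def DL3 (hA : HopfQuasigroup R A) (hH : HopfQuasigroup R H)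
    (Ψ : H ⊗[R] A →ₗ[R] A ⊗[R] H) : Prop :=
  ∀ h : H, Ψ (h ⊗ₜ[R] hA.unit) = hA.unit ⊗ₜ[R] h

/-- (dl4): `Ψ∘(η_H⊗A) = A⊗η_H`. -/
def DL4 (hA : HopfQuasigroup R A) (hH : HopfQuasigroup R H)
    (Ψ : H ⊗[R] A →ₗ[R] A ⊗[R] H) : Prop :=
  ∀ a : A, Ψ (hH.unit ⊗ₜ[R] a) = a ⊗ₜ[R] hH.unit

/-- (cdl1): `δ_{A⊗H}∘Ψ = (Ψ⊗Ψ)∘δ_{H⊗A}`. -/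
def CDL1 (hA : HopfQuasigroup R A) (hH : HopfQuasigroup R H)
    (Ψ : H ⊗[R] A →ₗ[R] A ⊗[R] H) : Prop :=
  comulT hA hH ∘ₗ Ψ = TensorProduct.map Ψ Ψ ∘ₗ comulT hH hA

/-- (cdl2): `(ε_A⊗ε_H)∘Ψ = ε_H⊗ε_A`. -/
def CDL2 (hA : HopfQuasigroup R A) (hH : HopfQuasigroup R H)
    (Ψ : H ⊗[R] A →ₗ[R] A ⊗[R] H) : Prop :=
  counitT hA hH ∘ₗ Ψ = counitT hH hA

/-- (adl1): `(A⊗μ_H)∘(Ψ⊗μ_H)∘(H⊗Ψ⊗H)∘(((λ_H⊗H)∘δ_H)⊗A⊗H) = ε_H⊗A⊗H`. -/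
def ADL1 (hA : HopfQuasigroup R A) (hH : HopfQuasigroup R H)
    (Ψ : H ⊗[R] A →ₗ[R] A ⊗[R] H) : Prop :=
  hH.mul.lTensor A ∘ₗ (TensorProduct.assoc R A H H).toLinearMap
      ∘ₗ TensorProduct.map Ψ hH.mul
      ∘ₗ (TensorProduct.assoc R H A (H ⊗[R] H)).symm.toLinearMap
      ∘ₗ ((TensorProduct.assoc R A H H).toLinearMap).lTensor H
      ∘ₗ (Ψ.rTensor H).lTensor H
      ∘ₗ ((TensorProduct.assoc R H A H).symm.toLinearMap).lTensor H
      ∘ₗ (TensorProduct.assoc R H H (A ⊗[R] H)).toLinearMap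
      ∘ₗ ((hH.antipode.rTensor H ∘ₗ hH.comul).rTensor (A ⊗[R] H))
    = (TensorProduct.lid R (A ⊗[R] H)).toLinearMap ∘ₗ hH.counit.rTensor (A ⊗[R] H)

/-- (adl2): `(A⊗μ_H)∘(Ψ⊗μ_H)∘(H⊗Ψ⊗H)∘(((H⊗λ_H)∘δ_H)⊗A⊗H) = ε_H⊗A⊗H`. -/
def ADL2 (hA : HopfQuasigroup R A) (hH : HopfQuasigroup R H)
    (Ψ : H ⊗[R] A →ₗ[R] A ⊗[R] H) : Prop :=
  hH.mul.lTensor A ∘ₗ (TensorProduct.assoc R A H H).toLinearMap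
      ∘ₗ TensorProduct.map Ψ hH.mul
      ∘ₗ (TensorProduct.assoc R H A (H ⊗[R] H)).symm.toLinearMap
      ∘ₗ ((TensorProduct.assoc R A H H).toLinearMap).lTensor H
      ∘ₗ (Ψ.rTensor H).lTensor H
      ∘ₗ ((TensorProduct.assoc R H A H).symm.toLinearMap).lTensor H
      ∘ₗ (TensorProduct.assoc R H H (A ⊗[R] H)).toLinearMap
      ∘ₗ ((hH.antipode.lTensor H ∘ₗ hH.comul).rTensor (A ⊗[R] H))
    = (TensorProduct.lid R (A ⊗[R] H)).toLinearMap ∘ₗ hH.counit.rTensor (A ⊗[R] H)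

/-- (adl3): `(μ_A⊗H)∘(μ_A⊗Ψ)∘(A⊗Ψ⊗A)∘(A⊗H⊗((λ_A⊗A)∘δ_A)) = A⊗H⊗ε_A`. -/
def ADL3 (hA : HopfQuasigroup R A) (hH : HopfQuasigroup R H)
    (Ψ : H ⊗[R] A →ₗ[R] A ⊗[R] H) : Prop :=
  hA.mul.rTensor H ∘ₗ (TensorProduct.assoc R A A H).symm.toLinearMap
      ∘ₗ TensorProduct.map hA.mul Ψ
      ∘ₗ (TensorProduct.assoc R A A (H ⊗[R] A)).symm.toLinearMap
      ∘ₗ ((TensorProduct.assoc R A H A).toLinearMap).lTensor A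
      ∘ₗ (Ψ.rTensor A).lTensor A
      ∘ₗ ((TensorProduct.assoc R H A A).symm.toLinearMap).lTensor A
      ∘ₗ (TensorProduct.assoc R A H (A ⊗[R] A)).toLinearMap
      ∘ₗ ((hA.antipode.rTensor A ∘ₗ hA.comul).lTensor (A ⊗[R] H))
    = (TensorProduct.rid R (A ⊗[R] H)).toLinearMap ∘ₗ hA.counit.lTensor (A ⊗[R] H)

/-- (adl4): `(μ_A⊗H)∘(μ_A⊗Ψ)∘(A⊗Ψ⊗A)∘(A⊗H⊗((A⊗λ_A)∘δ_A)) = A⊗H⊗ε_A`. -/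
def ADL4 (hA : HopfQuasigroup R A) (hH : HopfQuasigroup R H)
    (Ψ : H ⊗[R] A →ₗ[R] A ⊗[R] H) : Prop :=
  hA.mul.rTensor H ∘ₗ (TensorProduct.assoc R A A H).symm.toLinearMap
      ∘ₗ TensorProduct.map hA.mul Ψ
      ∘ₗ (TensorProduct.assoc R A A (H ⊗[R] A)).symm.toLinearMap
      ∘ₗ ((TensorProduct.assoc R A H A).toLinearMap).lTensor A
      ∘ₗ (Ψ.rTensor A).lTensor A
      ∘ₗ ((TensorProduct.assoc R H A A).symm.toLinearMap).lTensor A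
      ∘ₗ (TensorProduct.assoc R A H (A ⊗[R] A)).toLinearMap
      ∘ₗ ((hA.antipode.lTensor A ∘ₗ hA.comul).lTensor (A ⊗[R] H))
    = (TensorProduct.rid R (A ⊗[R] H)).toLinearMap ∘ₗ hA.counit.lTensor (A ⊗[R] H)

/-- `Ψ : H⊗A → A⊗H` is an `a`-comonoidal distributive law of `H` over `A`. -/
def IsAComonoidalDistLaw (hA : HopfQuasigroup R A) (hH : HopfQuasigroup R H)
    (Ψ : H ⊗[R] A →ₗ[R] A ⊗[R] H) : Prop :=
  DL1 hA hH Ψ ∧ DL2 hA hH Ψ ∧ DL3 hA hH Ψ ∧ DL4 hA hH Ψ ∧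
  CDL1 hA hH Ψ ∧ CDL2 hA hH Ψ ∧
  ADL1 hA hH Ψ ∧ ADL2 hA hH Ψ ∧ ADL3 hA hH Ψ ∧ ADL4 hA hH Ψ

/-- The wreath product magma product `μ = (μ_A⊗μ_H)∘(A⊗Ψ⊗H)` on `A ⊗ H`. -/
def wreathMul (hA : HopfQuasigroup R A) (hH : HopfQuasigroup R H)
    (Ψ : H ⊗[R] A →ₗ[R] A ⊗[R] H) :
    (A ⊗[R] H) ⊗[R] (A ⊗[R] H) →ₗ[R] A ⊗[R] H :=
  TensorProduct.map hA.mul hH.mul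
    ∘ₗ (TensorProduct.assoc R A A (H ⊗[R] H)).symm.toLinearMap
    ∘ₗ ((TensorProduct.assoc R A H H).toLinearMap).lTensor A
    ∘ₗ (Ψ.rTensor H).lTensor A
    ∘ₗ ((TensorProduct.assoc R H A H).symm.toLinearMap).lTensor A
    ∘ₗ (TensorProduct.assoc R A H (A ⊗[R] H)).toLinearMap

end DistLaw

section AuxProof

variable {R : Type*} [CommRing R] {A H : Type*}
  [AddCommGroup A] [Module R A] [AddCommGroup H] [Module R H]

/-- The tail of the wreath product: `(μ_A⊗μ_H)` after reassociation. -/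
def auxG (hA : HopfQuasigroup R A) (hH : HopfQuasigroup R H) :
    A ⊗[R] ((A ⊗[R] H) ⊗[R] H) →ₗ[R] A ⊗[R] H :=
  TensorProduct.map hA.mul hH.mul
    ∘ₗ (TensorProduct.assoc R A A (H ⊗[R] H)).symm.toLinearMap
    ∘ₗ ((TensorProduct.assoc R A H H).toLinearMap).lTensor A

/-- The doubled, shuffled wreath tail. -/
def auxTheta (hA : HopfQuasigroup R A) (hH : HopfQuasigroup R H) :
    (A ⊗[R] A) ⊗[R] (((A ⊗[R] H) ⊗[R] (A ⊗[R] H)) ⊗[R] (H ⊗[R] H)) →ₗ[R]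
      (A ⊗[R] H) ⊗[R] (A ⊗[R] H) :=
  TensorProduct.map (auxG hA hH) (auxG hA hH)
    ∘ₗ (TensorProduct.tensorTensorTensorComm R A A
        ((A ⊗[R] H) ⊗[R] H) ((A ⊗[R] H) ⊗[R] H)).toLinearMap
    ∘ₗ ((TensorProduct.tensorTensorTensorComm R
        (A ⊗[R] H) (A ⊗[R] H) H H).toLinearMap).lTensor (A ⊗[R] A)

variable (hA : HopfQuasigroup R A) (hH : HopfQuasigroup R H)
  (Ψ : H ⊗[R] A →ₗ[R] A ⊗[R] H)

lemma auxG_tmul (a x : A) (y g : H) :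
    auxG hA hH (a ⊗ₜ[R] ((x ⊗ₜ[R] y) ⊗ₜ[R] g))
      = hA.mul (a ⊗ₜ[R] x) ⊗ₜ[R] hH.mul (y ⊗ₜ[R] g) := by
  simp [auxG]

lemma wreathMul_tmul (a b : A) (h g : H) :
    wreathMul hA hH Ψ ((a ⊗ₜ[R] h) ⊗ₜ[R] (b ⊗ₜ[R] g))
      = auxG hA hH (a ⊗ₜ[R] (Ψ (h ⊗ₜ[R] b) ⊗ₜ[R] g)) := by
  simp [wreathMul, auxG]

lemma auxTheta_tmul (a₁ a₂ : A) (u₁ u₂ : A ⊗[R] H) (g₁ g₂ : H) :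
    auxTheta hA hH ((a₁ ⊗ₜ[R] a₂) ⊗ₜ[R] ((u₁ ⊗ₜ[R] u₂) ⊗ₜ[R] (g₁ ⊗ₜ[R] g₂)))
      = auxG hA hH (a₁ ⊗ₜ[R] (u₁ ⊗ₜ[R] g₁)) ⊗ₜ[R] auxG hA hH (a₂ ⊗ₜ[R] (u₂ ⊗ₜ[R] g₂)) := by
  simp [auxTheta]

lemma comulT_tmul {X Y : Type*} [AddCommGroup X] [Module R X] [AddCommGroup Y] [Module R Y]
    (hX : HopfQuasigroup R X) (hY : HopfQuasigroup R Y) (x : X) (y : Y) :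
    comulT hX hY (x ⊗ₜ[R] y)
      = (TensorProduct.tensorTensorTensorComm R X X Y Y) (hX.comul x ⊗ₜ[R] hY.comul y) := by
  simp [comulT]

lemma counitT_tmul {X Y : Type*} [AddCommGroup X] [Module R X] [AddCommGroup Y] [Module R Y]
    (hX : HopfQuasigroup R X) (hY : HopfQuasigroup R Y) (x : X) (y : Y) :
    counitT hX hY (x ⊗ₜ[R] y) = hX.counit x * hY.counit y := by
  simp [counitT, smul_eq_mul]

lemma claim1 (a : A) (g : H) (z : A ⊗[R] H) :
    comulT hA hH (auxG hA hH (a ⊗ₜ[R] (z ⊗ₜ[R] g)))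
      = auxTheta hA hH (hA.comul a ⊗ₜ[R] (comulT hA hH z ⊗ₜ[R] hH.comul g)) := by
  induction z using TensorProduct.induction_on with
  | zero => simp
  | add z₁ z₂ ih₁ ih₂ => simp only [tmul_add, add_tmul, map_add, ih₁, ih₂]
  | tmul x y =>
    rw [auxG_tmul, comulT_tmul]
    have hmA := LinearMap.congr_fun hA.comul_mul (a ⊗ₜ[R] x)
    have hmH := LinearMap.congr_fun hH.comul_mul (y ⊗ₜ[R] g)
    simp only [LinearMap.comp_apply, TensorProduct.map_tmul, LinearEquiv.coe_coe] at hmA hmH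
    rw [hmA, hmH, comulT_tmul]
    generalize hA.comul a = Da
    generalize hA.comul x = Dx
    generalize hH.comul y = Dy
    generalize hH.comul g = Dg
    induction Da using TensorProduct.induction_on with
    | zero => simp
    | add p q ihp ihq => simp only [tmul_add, add_tmul, map_add, ihp, ihq]
    | tmul a₁ a₂ =>
      induction Dx using TensorProduct.induction_on with
      | zero => simp
      | add p q ihp ihq => simp only [tmul_add, add_tmul, map_add, ihp, ihq]
      | tmul x₁ x₂ =>
        induction Dy using TensorProduct.induction_on with
        | zero => simp
        | add p q ihp ihq => simp only [tmul_add, add_tmul, map_add, ihp, ihq]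
        | tmul y₁ y₂ =>
          induction Dg using TensorProduct.induction_on with
          | zero => simp
          | add p q ihp ihq => simp only [tmul_add, add_tmul, map_add, ihp, ihq]
          | tmul g₁ g₂ =>
            simp [auxTheta, auxG]

lemma claim3 (Da : A ⊗[R] A) (Dh : H ⊗[R] H) (Db : A ⊗[R] A) (Dg : H ⊗[R] H) :
    TensorProduct.map (wreathMul hA hH Ψ) (wreathMul hA hH Ψ)
      ((TensorProduct.tensorTensorTensorComm R (A ⊗[R] H) (A ⊗[R] H) (A ⊗[R] H) (A ⊗[R] H))
        ((TensorProduct.tensorTensorTensorComm R A A H H (Da ⊗ₜ[R] Dh))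
          ⊗ₜ[R] (TensorProduct.tensorTensorTensorComm R A A H H (Db ⊗ₜ[R] Dg))))
      = auxTheta hA hH (Da ⊗ₜ[R]
          ((TensorProduct.map Ψ Ψ
            (TensorProduct.tensorTensorTensorComm R H H A A (Dh ⊗ₜ[R] Db))) ⊗ₜ[R] Dg)) := by
  induction Da using TensorProduct.induction_on with
  | zero => simp
  | add p q ihp ihq => simp only [tmul_add, add_tmul, map_add, ihp, ihq]
  | tmul a₁ a₂ =>
    induction Dh using TensorProduct.induction_on with
    | zero => simp
    | add p q ihp ihq => simp only [tmul_add, add_tmul, map_add, ihp, ihq]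
    | tmul h₁ h₂ =>
      induction Db using TensorProduct.induction_on with
      | zero => simp
      | add p q ihp ihq => simp only [tmul_add, add_tmul, map_add, ihp, ihq]
      | tmul b₁ b₂ =>
        induction Dg using TensorProduct.induction_on with
        | zero => simp
        | add p q ihp ihq => simp only [tmul_add, add_tmul, map_add, ihp, ihq]
        | tmul g₁ g₂ =>
          simp only [TensorProduct.tensorTensorTensorComm_tmul, TensorProduct.map_tmul,
            wreathMul_tmul, auxTheta_tmul]

lemma claim5 (a : A) (g : H) (z : A ⊗[R] H) :
    counitT hA hH (auxG hA hH (a ⊗ₜ[R] (z ⊗ₜ[R] g)))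
      = hA.counit a * hH.counit g * counitT hA hH z := by
  induction z using TensorProduct.induction_on with
  | zero => simp
  | add z₁ z₂ ih₁ ih₂ =>
    simp only [tmul_add, add_tmul, map_add, ih₁, ih₂, mul_add]
  | tmul x y =>
    rw [auxG_tmul, counitT_tmul]
    have hmA := LinearMap.congr_fun hA.counit_mul (a ⊗ₜ[R] x)
    have hmH := LinearMap.congr_fun hH.counit_mul (y ⊗ₜ[R] g)
    simp only [LinearMap.comp_apply, TensorProduct.map_tmul, LinearEquiv.coe_coe,
      TensorProduct.lid_tmul, smul_eq_mul] at hmA hmH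
    rw [hmA, hmH, counitT_tmul]
    ring

end AuxProof

/-- For a comonoidal distributive law `Ψ : H⊗A → A⊗H` between Hopf quasigroups, the
wreath product on `A⊗H` with the tensor product comonoid structure is a non-associative
bimonoid: the tensor coproduct and counit are multiplicative with respect to the
wreath product. -/
theorem wreathProduct_nonassociative_bimonoid {R : Type*} [CommRing R] {A H : Type*}
    [AddCommGroup A] [Module R A] [AddCommGroup H] [Module R H]
    (hA : HopfQuasigroup R A) (hH : HopfQuasigroup R H)
    (Ψ : H ⊗[R] A →ₗ[R] A ⊗[R] H)
    (h1 : DL1 hA hH Ψ) (h2 : DL2 hA hH Ψ) (h3 : DL3 hA hH Ψ) (h4 : DL4 hA hH Ψ)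
    (h5 : CDL1 hA hH Ψ) (h6 : CDL2 hA hH Ψ) :
    (comulT hA hH ∘ₗ wreathMul hA hH Ψ
      = TensorProduct.map (wreathMul hA hH Ψ) (wreathMul hA hH Ψ)
        ∘ₗ (TensorProduct.tensorTensorTensorComm R
            (A ⊗[R] H) (A ⊗[R] H) (A ⊗[R] H) (A ⊗[R] H)).toLinearMap
        ∘ₗ TensorProduct.map (comulT hA hH) (comulT hA hH)) ∧
    (counitT hA hH ∘ₗ wreathMul hA hH Ψ
      = (TensorProduct.lid R R).toLinearMap
        ∘ₗ TensorProduct.map (counitT hA hH) (counitT hA hH)) := by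
  constructor
  · apply TensorProduct.ext_fourfold'
    intro a h b g
    have h5' := LinearMap.congr_fun h5 (h ⊗ₜ[R] b)
    simp only [LinearMap.comp_apply] at h5'
    simp only [LinearMap.comp_apply, TensorProduct.map_tmul, LinearEquiv.coe_coe]
    rw [wreathMul_tmul, claim1, h5', comulT_tmul, comulT_tmul, comulT_tmul,
      claim3]
  · apply TensorProduct.ext_fourfold'
    intro a h b g
    have h6' := LinearMap.congr_fun h6 (h ⊗ₜ[R] b)
    simp only [LinearMap.comp_apply] at h6'
    simp only [LinearMap.comp_apply, TensorProduct.map_tmul, LinearEquiv.coe_coe,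
      TensorProduct.lid_tmul, smul_eq_mul]
    rw [wreathMul_tmul, claim5, h6', counitT_tmul, counitT_tmul, counitT_tmul]
    ring
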